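/- Let Σ₁, …, Σ_n be symmetric positive definite d×d real matrices and λ₁, …, λ_n real weights with Σ_{k=1}^n λ_k = 1 satisfying the Spectral Dominance of Positive Weights condition. Then for every symmetric positive definite d×d matrix S, the matrix Σ_{k=1}^n λ_k · GM(S^{-1}, Σ_k) is symmetric positive definite. -/

import Mathlib

open Matrix BigOperators Finset
open scoped Classical

/-- Unique positive semidefinite square root of a positive semidefinite matrix
(and junk value `0` on other matrices). -/
noncomputable def msqrt {d : ℕ} (M : Matrix (Fin d) (Fin d) ℝ) :
    Matrix (Fin d) (Fin d) ℝ :=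
  if h : M.PosSemidef then
    (h.1.eigenvectorUnitary : Matrix (Fin d) (Fin d) ℝ) *
      diagonal ((↑) ∘ (√·) ∘ h.1.eigenvalues) *
      (star h.1.eigenvectorUnitary : Matrix (Fin d) (Fin d) ℝ) else 0

/-- Smallest eigenvalue of a symmetric matrix (junk value `0` otherwise). -/
noncomputable def lmin {d : ℕ} (M : Matrix (Fin d) (Fin d) ℝ) : ℝ :=
  if h : M.IsHermitian then ⨅ i, h.eigenvalues i else 0

/-- Largest eigenvalue of a symmetric matrix (junk value `0` otherwise). -/
noncomputable def lmax {d : ℕ} (M : Matrix (Fin d) (Fin d) ℝ) : ℝ :=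
  if h : M.IsHermitian then ⨆ i, h.eigenvalues i else 0

/-- Squared Bures–Wasserstein distance. -/
noncomputable def W2sq {d : ℕ} (A B : Matrix (Fin d) (Fin d) ℝ) : ℝ :=
  A.trace + B.trace - 2 * (msqrt (msqrt A * B * msqrt A)).trace

/-- The conditional barycenter objective `F`. -/
noncomputable def Fobj {d n : ℕ} (Sig : Fin n → Matrix (Fin d) (Fin d) ℝ)
    (lam : Fin n → ℝ) (S : Matrix (Fin d) (Fin d) ℝ) : ℝ :=
  ∑ k, lam k * W2sq S (Sig k)

/-- Geometric mean `GM(S⁻¹, Σ) = S^{-1/2} (S^{1/2} Σ S^{1/2})^{1/2} S^{-1/2}`. -/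
noncomputable def GMinv {d : ℕ} (S Sigma : Matrix (Fin d) (Fin d) ℝ) :
    Matrix (Fin d) (Fin d) ℝ :=
  (msqrt S)⁻¹ * msqrt (msqrt S * Sigma * msqrt S) * (msqrt S)⁻¹

/-- The Spectral Dominance of Positive Weights condition. -/
def SDPW {d n : ℕ} (Sig : Fin n → Matrix (Fin d) (Fin d) ℝ) (lam : Fin n → ℝ) : Prop :=
  ∑ j ∈ Finset.univ.filter (fun k => lam k < 0), (-lam j) * Real.sqrt (lmax (Sig j))
    < ∑ i ∈ Finset.univ.filter (fun k => 0 < lam k), lam i * Real.sqrt (lmin (Sig i))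

/-!
Write `R = S^{1/2}`. Sandwiching `λ_min(Σ) I ≤ Σ ≤ λ_max(Σ) I` and conjugating by `R` gives
`λ_min(Σ) S ≤ R Σ R ≤ λ_max(Σ) S`; the matrix square root is operator monotone (if `X, Y ≥ 0` and
`X² ≤ Y²` then `X ≤ Y`, as one sees on an eigenvector of `Y - X`), so
`√λ_min(Σ) R ≤ (R Σ R)^{1/2} ≤ √λ_max(Σ) R`, and conjugating by `R⁻¹`,
`√λ_min(Σ) R⁻¹ ≤ GM(S⁻¹, Σ) ≤ √λ_max(Σ) R⁻¹`. Using the lower bound for positive weights and the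
upper bound for negative ones, `∑ λ_k GM(S⁻¹, Σ_k) ≥ c R⁻¹`, where `c > 0` is exactly the gap in
the Spectral Dominance condition.
-/

open scoped MatrixOrder

theorem Matrix.PosSemidef.le_of_mul_self_le {n : Type*} [Fintype n] [DecidableEq n]
    {X Y : Matrix n n ℝ} (hX : X.PosSemidef) (hY : Y.PosSemidef) (h : X * X ≤ Y * Y) :
    X ≤ Y := by
  have hD : (Y - X).IsHermitian := hY.1.sub hX.1
  rw [Matrix.le_iff, hD.posSemidef_iff_eigenvalues_nonneg, Pi.le_def]
  intro i
  set t := hD.eigenvalues i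
  set v : n → ℝ := ⇑(hD.eigenvectorBasis i)
  have hv : v ≠ 0 := fun h0 =>
    hD.eigenvectorBasis.orthonormal.ne_zero i (by ext j; exact congrFun h0 j)
  have heig : (Y - X) *ᵥ v = t • v := hD.mulVec_eigenvectorBasis i
  have quad {A : Matrix n n ℝ} (hA : A.PosSemidef) : 0 ≤ v ⬝ᵥ A *ᵥ v := by
    simpa using hA.dotProduct_mulVec_nonneg v
  have hsplit : v ⬝ᵥ (Y * Y - X * X) *ᵥ v = t * (v ⬝ᵥ Y *ᵥ v + v ⬝ᵥ X *ᵥ v) := by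
    have hsymm : (Y - X)ᵀ = Y - X := by simpa using hD.eq
    rw [show Y * Y - X * X = Y * (Y - X) + (Y - X) * X by noncomm_ring, add_mulVec,
      dotProduct_add, ← mulVec_mulVec, ← mulVec_mulVec, heig, dotProduct_mulVec v (Y - X),
      ← mulVec_transpose, hsymm, heig]
    simp only [mulVec_smul, dotProduct_smul, smul_dotProduct, smul_eq_mul]
    ring
  have h0 : 0 ≤ t * (v ⬝ᵥ Y *ᵥ v + v ⬝ᵥ X *ᵥ v) := hsplit ▸ quad h
  rcases (add_nonneg (quad hY) (quad hX)).lt_or_eq with hpos | hzero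
  · exact nonneg_of_mul_nonneg_left h0 hpos
  · have hYv : Y *ᵥ v = 0 := (hY.dotProduct_mulVec_zero_iff v).mp <| by
      rw [star_trivial]; linarith [quad hY, quad hX]
    have hXv : X *ᵥ v = 0 := (hX.dotProduct_mulVec_zero_iff v).mp <| by
      rw [star_trivial]; linarith [quad hY, quad hX]
    have htv : t • v = 0 := by rw [← heig, sub_mulVec, hXv, hYv, sub_zero]
    exact ((smul_eq_zero.mp htv).resolve_right hv).ge

lemma Matrix.PosDef.of_le {n : Type*} [Fintype n] {A B : Matrix n n ℝ}
    (hA : A.PosDef) (h : A ≤ B) : B.PosDef := by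
  simpa using hA.add_posSemidef (Matrix.le_iff.mp h)

lemma msqrt_eq_cfcSqrt {d : ℕ} {M : Matrix (Fin d) (Fin d) ℝ} (h : M.PosSemidef) :
    msqrt M = CFC.sqrt M := by
  rw [msqrt, dif_pos h, CFC.sqrt_eq_cfc, cfc_nnreal_eq_real _ M, h.1.cfc_eq, IsHermitian.cfc,
    Unitary.conjStarAlgAut_apply]
  congr 3
  funext i
  simp [h.eigenvalues_nonneg i]

section msqrt

variable {d : ℕ} {A B M R : Matrix (Fin d) (Fin d) ℝ}

lemma posSemidef_msqrt (h : M.PosSemidef) : (msqrt M).PosSemidef := by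
  rw [msqrt_eq_cfcSqrt h, ← nonneg_iff_posSemidef]
  exact CFC.sqrt_nonneg M

lemma msqrt_mul_self (h : M.PosSemidef) : msqrt M * msqrt M = M := by
  rw [msqrt_eq_cfcSqrt h]
  exact CFC.sqrt_mul_sqrt_self M (nonneg_iff_posSemidef.mpr h)

lemma posDef_msqrt (h : M.PosDef) : (msqrt M).PosDef := by
  refine (posSemidef_msqrt h.posSemidef).posDef_iff_isUnit.mpr ?_
  refine isUnit_of_mul_isUnit_left (y := msqrt M) ?_
  rw [msqrt_mul_self h.posSemidef]
  exact h.isUnit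

lemma msqrt_le_msqrt (hA : A.PosSemidef) (hAB : A ≤ B) : msqrt A ≤ msqrt B := by
  have hB : B.PosSemidef := nonneg_iff_posSemidef.mp ((nonneg_iff_posSemidef.mpr hA).trans hAB)
  refine (posSemidef_msqrt hA).le_of_mul_self_le (posSemidef_msqrt hB) ?_
  rwa [msqrt_mul_self hA, msqrt_mul_self hB]

lemma posSemidef_smul_mul_self (hR : R.IsHermitian) {c : ℝ} (hc : 0 ≤ c) :
    (c • (R * R)).PosSemidef := by
  simpa only [hR.eq] using (posSemidef_conjTranspose_mul_self R).smul hc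

lemma msqrt_smul_mul_self (hR : R.PosSemidef) {c : ℝ} (hc : 0 ≤ c) :
    msqrt (c • (R * R)) = √c • R := by
  have hcR : (√c • R).PosSemidef := hR.smul (Real.sqrt_nonneg c)
  have hsq : √c • R * (√c • R) = c • (R * R) := by
    rw [smul_mul_smul_comm, Real.mul_self_sqrt hc]
  have hM := posSemidef_smul_mul_self hR.1 hc
  have h : msqrt (c • (R * R)) * msqrt (c • (R * R)) = √c • R * (√c • R) :=
    (msqrt_mul_self hM).trans hsq.symm
  exact le_antisymm ((posSemidef_msqrt hM).le_of_mul_self_le hcR h.le)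
    (hcR.le_of_mul_self_le (posSemidef_msqrt hM) h.ge)

end msqrt

section eigenvalueBounds

variable {d : ℕ} {M : Matrix (Fin d) (Fin d) ℝ}

lemma lmin_smul_one_le (hM : M.IsHermitian) :
    lmin M • (1 : Matrix (Fin d) (Fin d) ℝ) ≤ M := by
  rw [← Algebra.algebraMap_eq_smul_one]
  refine algebraMap_le_of_le_spectrum (fun x hx => ?_) hM.isSelfAdjoint
  obtain ⟨i, rfl⟩ := hM.spectrum_real_eq_range_eigenvalues ▸ hx
  rw [lmin, dif_pos hM]
  exact ciInf_le (Set.finite_range _).bddBelow i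

lemma le_lmax_smul_one (hM : M.IsHermitian) :
    M ≤ lmax M • (1 : Matrix (Fin d) (Fin d) ℝ) := by
  rw [← Algebra.algebraMap_eq_smul_one]
  refine le_algebraMap_of_spectrum_le (fun x hx => ?_) hM.isSelfAdjoint
  obtain ⟨i, rfl⟩ := hM.spectrum_real_eq_range_eigenvalues ▸ hx
  rw [lmax, dif_pos hM]
  exact le_ciSup (Set.finite_range _).bddAbove i

lemma lmin_nonneg (hM : M.PosSemidef) : 0 ≤ lmin M := by
  rw [lmin, dif_pos hM.1]
  exact Real.iInf_nonneg hM.eigenvalues_nonneg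

lemma lmax_nonneg (hM : M.PosSemidef) : 0 ≤ lmax M := by
  rw [lmax, dif_pos hM.1]
  exact Real.iSup_nonneg hM.eigenvalues_nonneg

end eigenvalueBounds

section geometricMean

variable {d : ℕ} {R S Sigma : Matrix (Fin d) (Fin d) ℝ} {c : ℝ}

lemma conj_smul_one : R * (c • 1) * R = c • (R * R) := by
  rw [mul_smul_one, smul_mul]

lemma sqrt_smul_le_msqrt_conj (hR : R.PosSemidef) (hc : 0 ≤ c) (h : c • 1 ≤ Sigma) :
    √c • R ≤ msqrt (R * Sigma * R) := by
  have hconj := star_left_conjugate_le_conjugate h R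
  rw [star_eq_conjTranspose, hR.1.eq, conj_smul_one] at hconj
  rw [← msqrt_smul_mul_self hR hc]
  exact msqrt_le_msqrt (posSemidef_smul_mul_self hR.1 hc) hconj

lemma msqrt_conj_le_sqrt_smul (hR : R.PosSemidef) (hSigma : Sigma.PosSemidef) (hc : 0 ≤ c)
    (h : Sigma ≤ c • 1) : msqrt (R * Sigma * R) ≤ √c • R := by
  have hconj := star_left_conjugate_le_conjugate h R
  rw [star_eq_conjTranspose, hR.1.eq, conj_smul_one] at hconj
  rw [← msqrt_smul_mul_self hR hc]
  refine msqrt_le_msqrt ?_ hconj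
  simpa only [hR.1.eq] using hSigma.mul_mul_conjTranspose_same R

lemma inv_conj_smul (hR : IsUnit R.det) : R⁻¹ * (c • R) * R⁻¹ = c • R⁻¹ := by
  rw [Matrix.mul_smul, Matrix.smul_mul, nonsing_inv_mul _ hR, one_mul]

lemma sqrt_lmin_smul_le_GMinv (hS : S.PosDef) (hSigma : Sigma.PosSemidef) :
    √(lmin Sigma) • (msqrt S)⁻¹ ≤ GMinv S Sigma := by
  have hR := posDef_msqrt hS
  have h := star_left_conjugate_le_conjugate
    (sqrt_smul_le_msqrt_conj hR.posSemidef (lmin_nonneg hSigma) (lmin_smul_one_le hSigma.1))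
    (msqrt S)⁻¹
  rwa [star_eq_conjTranspose, hR.1.inv.eq, inv_conj_smul hR.det_pos.ne'.isUnit] at h

lemma GMinv_le_sqrt_lmax_smul (hS : S.PosDef) (hSigma : Sigma.PosSemidef) :
    GMinv S Sigma ≤ √(lmax Sigma) • (msqrt S)⁻¹ := by
  have hR := posDef_msqrt hS
  have h := star_left_conjugate_le_conjugate
    (msqrt_conj_le_sqrt_smul hR.posSemidef hSigma (lmax_nonneg hSigma)
      (le_lmax_smul_one hSigma.1))
    (msqrt S)⁻¹
  rwa [star_eq_conjTranspose, hR.1.inv.eq, inv_conj_smul hR.det_pos.ne'.isUnit] at h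

end geometricMean

lemma mul_ite_pos_smul_le_smul {M : Type*} [AddCommGroup M] [PartialOrder M]
    [IsOrderedAddMonoid M] [Module ℝ M] [PosSMulMono ℝ M] {w a b : ℝ} {t x : M}
    (ha : a • t ≤ x) (hb : x ≤ b • t) : (w * if 0 < w then a else b) • t ≤ w • x := by
  rw [mul_smul]
  split_ifs with hw
  · exact smul_le_smul_of_nonneg_left ha hw.le
  · exact smul_le_smul_of_nonpos_left hb (not_lt.mp hw)

lemma sum_mul_ite_pos {ι : Type*} (s : Finset ι) (w a b : ι → ℝ) :
    ∑ k ∈ s, w k * (if 0 < w k then a k else b k) =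
      ∑ k ∈ s with 0 < w k, w k * a k - ∑ k ∈ s with w k < 0, -w k * b k := by
  rw [Finset.sum_filter, Finset.sum_filter, ← Finset.sum_sub_distrib]
  refine Finset.sum_congr rfl fun k _ => ?_
  rcases lt_trichotomy (w k) 0 with hw | hw | hw
  · simp [hw, hw.not_gt]
  · simp [hw]
  · simp [hw, hw.not_gt]

theorem stmt10_general {d n : ℕ} (Sig : Fin n → Matrix (Fin d) (Fin d) ℝ)
    (lam : Fin n → ℝ) (hSig : ∀ k, (Sig k).PosDef)
    (hSD : SDPW Sig lam)
    (S : Matrix (Fin d) (Fin d) ℝ) (hS : S.PosDef) :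
    (∑ k, lam k • GMinv S (Sig k)).PosDef := by
  set c : Fin n → ℝ := fun k => if 0 < lam k then √(lmin (Sig k)) else √(lmax (Sig k))
  have hc : 0 < ∑ k, lam k * c k := by
    rw [sum_mul_ite_pos]
    exact sub_pos.mpr hSD
  refine (((posDef_msqrt hS).inv).smul hc).of_le ?_
  rw [Finset.sum_smul]
  exact Finset.sum_le_sum fun k _ => mul_ite_pos_smul_le_smul
    (sqrt_lmin_smul_le_GMinv hS (hSig k).posSemidef)
    (GMinv_le_sqrt_lmax_smul hS (hSig k).posSemidef)

/-- under Spectral Dominance, `∑ₖ λₖ GM(S⁻¹, Σₖ)` is positive definite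
for every positive definite `S`. -/
theorem stmt10 {d n : ℕ} (Sig : Fin n → Matrix (Fin d) (Fin d) ℝ)
    (lam : Fin n → ℝ) (hSig : ∀ k, (Sig k).PosDef) (hsum : ∑ k, lam k = 1)
    (hSD : SDPW Sig lam)
    (S : Matrix (Fin d) (Fin d) ℝ) (hS : S.PosDef) :
    (∑ k, lam k • GMinv S (Sig k)).PosDef :=
  stmt10_general Sig lam hSig hSD S hS
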